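/- Let J ⊆ S be such that W_J is finite, and let c ∈ W be a Coxeter-type element with supp(c) ∩ J = ∅. Set w = w_{0,J}·c and assume ℓ(w) = ℓ(w_{0,J}) + ℓ(c). Then every z ∈ W with z ≤ w admits a factorization z = uv with u ≤ w_{0,J}, v ≤ c and ℓ(z) = ℓ(u) + ℓ(v); moreover, such a pair (u, v) is unique. -/

import Mathlib

/-!
Statement 1. Let `J ⊆ S` with `W_J` finite and let `c` be a Coxeter-type element with
`supp(c) ∩ J = ∅`. Set `w = w_{0,J} * c` and assume `ℓ(w) = ℓ(w_{0,J}) + ℓ(c)`. Then every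
`z ≤ w` admits a unique factorization `z = u * v` with `u ≤ w_{0,J}`, `v ≤ c` and
`ℓ(z) = ℓ(u) + ℓ(v)`.
-/

variable {B W : Type*} [Group W] {M : CoxeterMatrix B}

/-- The Bruhat order on a Coxeter group, via the subword property. -/
def CoxeterSystem.bruhatLE (cs : CoxeterSystem M W) (u w : W) : Prop :=
  ∃ ω : List B, cs.IsReduced ω ∧ cs.wordProd ω = w ∧
    ∃ l : List B, l.Sublist ω ∧ cs.wordProd l = u

/-- The support of `w`: the set of (indices of) simple reflections appearing in some
(equivalently, any) reduced expression of `w`. -/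
def CoxeterSystem.support (cs : CoxeterSystem M W) (w : W) : Set B :=
  {i : B | ∃ ω : List B, cs.IsReduced ω ∧ cs.wordProd ω = w ∧ i ∈ ω}

/-- The standard parabolic subgroup `W_J`. -/
def CoxeterSystem.parabolic (cs : CoxeterSystem M W) (J : Set B) : Subgroup W :=
  Subgroup.closure (cs.simple '' J)

/-!
Everything rests on the subword property of the Bruhat order, which needs the strong exchange
condition. For the latter we use Tits' sign representation of `W` on `W × ZMod 2`: the simple
reflection `s i` conjugates the first coordinate and flips the sign exactly at `s i`, so the word
`ω` moves the sign of `t` by the parity of the number of occurrences of `t` in its right inversion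
sequence. As `t` itself flips its own sign, a descent `ℓ (π ω * t) < ℓ (π ω)` forces `t` to occur
there, i.e. `t` can be exchanged for a letter of `ω`.

Strong exchange identifies the order generated by `x < x * t` with the subword order, and shows
that `z ≤ w` makes `z` a subword of every word for `w`, in particular of a reduced word for
`w_{0,J}` followed by one for `c`; splitting that subword gives the factorization. For uniqueness,
`u'⁻¹ * u = v' * v⁻¹` lies in `W_J ∩ W_{supp c}`, which is trivial: for `g ≠ 1` in it, the first
letter `i ∈ J` of a reduced `J`-word for `g` gives `s i ≤ g`, so `s i = s j` for a letter `j` of a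
`supp c`-word for `g`, whence `i ∈ supp c`.
-/

open List Relation

namespace CoxeterSystem

variable (cs : CoxeterSystem M W)

local prefix:100 "s" => cs.simple
local prefix:100 "π" => cs.wordProd
local prefix:100 "ℓ" => cs.length
local prefix:100 "ris" => cs.rightInvSeq

section ReflectionRepresentation

open scoped Classical

-- Tits' sign representation, extended from the reflections to all of `W`.
noncomputable def reflectionPerm (i : B) : Equiv.Perm (W × ZMod 2) :=
  Function.Involutive.toPerm (fun p => (s i * p.1 * s i, p.2 + if p.1 = s i then 1 else 0)) <| by
    rintro ⟨t, a⟩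
    have hconj : s i * t * s i = s i ↔ t = s i := by
      constructor <;> intro h
      · simpa [mul_assoc] using congrArg (s i * · * s i) h
      · simp [h]
    simp only [hconj, add_assoc, CharTwo.add_self_eq_zero, add_zero]
    simp [mul_assoc]

theorem reflectionPerm_apply (i : B) (t : W) (a : ZMod 2) :
    cs.reflectionPerm i (t, a) = (s i * t * s i, a + if t = s i then 1 else 0) := rfl

theorem prod_map_reflectionPerm_apply (ω : List B) (t : W) (a : ZMod 2) :
    (ω.map cs.reflectionPerm).prod (t, a) = (π ω * t * (π ω)⁻¹, a + (ris ω).count t) := by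
  induction ω generalizing a with
  | nil => simp
  | cons i ω ih =>
    have hconj : π ω * t * (π ω)⁻¹ = s i ↔ (π ω)⁻¹ * s i * π ω = t := by
      constructor <;> intro h <;> rw [← h] <;> group
    rw [map_cons, prod_cons, Equiv.Perm.mul_apply, ih, reflectionPerm_apply, hconj]
    simp only [rightInvSeq, count_cons, beq_iff_eq, wordProd_cons, mul_inv_rev, inv_simple,
      Nat.cast_add, Nat.cast_ite, Nat.cast_one, Nat.cast_zero, add_assoc, mul_assoc]

theorem simple_mul_pow_mul_simple (i j : B) (m : ℕ) :
    s j * (s i * s j) ^ m = (s j * s i) ^ m * s j :=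
  (SemiconjBy.pow_right (by simp only [SemiconjBy, mul_assoc]) m : SemiconjBy _ _ _)

theorem rightInvSeq_flatten_replicate (i j : B) (m : ℕ) :
    ris (replicate m [i, j]).flatten =
      ((range (2 * m)).map fun k => (s j * s i) ^ k * s j).reverse := by
  induction m with
  | zero => simp
  | succ m ih =>
    have hprod : π (replicate m [i, j]).flatten = (s i * s j) ^ m := by
      simp [wordProd, prod_flatten, map_flatten, map_replicate, prod_replicate]
    have hinv : ((s i * s j) ^ m)⁻¹ = (s j * s i) ^ m := by
      rw [← inv_pow, mul_inv_rev, inv_simple, inv_simple]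
    have h₁ : (π (replicate m [i, j]).flatten)⁻¹ * s j * π (replicate m [i, j]).flatten =
        (s j * s i) ^ (2 * m) * s j := by
      rw [hprod, hinv, mul_assoc, simple_mul_pow_mul_simple, ← mul_assoc, ← pow_add, two_mul]
    have h₂ : (π (j :: (replicate m [i, j]).flatten))⁻¹ * s i *
        π (j :: (replicate m [i, j]).flatten) = (s j * s i) ^ (2 * m + 1) * s j := by
      rw [wordProd_cons, mul_inv_rev, inv_simple, hprod, hinv, mul_assoc, mul_assoc,
        simple_mul_pow_mul_simple, show 2 * m + 1 = m + 1 + m by ring, pow_add, pow_succ]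
      simp only [mul_assoc]
    rw [replicate_succ, flatten_cons, cons_append, cons_append, nil_append, rightInvSeq,
      rightInvSeq, ih, h₁, h₂, Nat.mul_succ, range_succ, range_succ]
    simp

theorem isLiftable_reflectionPerm : M.IsLiftable cs.reflectionPerm := by
  intro i j
  set ω := (replicate (M i j) [i, j]).flatten
  have hprod : (ω.map cs.reflectionPerm).prod =
      (cs.reflectionPerm i * cs.reflectionPerm j) ^ M i j := by
    simp [ω, map_flatten, prod_flatten, map_replicate, prod_replicate]
  have hπ : π ω = 1 := by
    simp [ω, wordProd, map_flatten, prod_flatten, map_replicate, prod_replicate]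
  have hperiodic : (range (M i j)).map (fun k => (s j * s i) ^ (M i j + k) * s j) =
      (range (M i j)).map (fun k => (s j * s i) ^ k * s j) := by
    simp [pow_add]
  -- Since `(s j * s i) ^ M i j = 1`, the right inversion sequence of `ω` is two equal halves.
  have heven (t : W) : ((ris ω).count t : ZMod 2) = 0 := by
    rw [rightInvSeq_flatten_replicate, count_reverse, two_mul, range_add, map_append, List.map_map]
    simp only [Function.comp_def, hperiodic, count_append, Nat.cast_add, CharTwo.add_self_eq_zero]
  rw [← hprod]
  ext ⟨t, a⟩ : 1
  rw [prod_map_reflectionPerm_apply, hπ, heven]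
  simp

noncomputable def reflectionRep : W →* Equiv.Perm (W × ZMod 2) :=
  cs.lift ⟨cs.reflectionPerm, cs.isLiftable_reflectionPerm⟩

theorem reflectionRep_wordProd_apply (ω : List B) (t : W) (a : ZMod 2) :
    cs.reflectionRep (π ω) (t, a) = (π ω * t * (π ω)⁻¹, a + (ris ω).count t) := by
  rw [← prod_map_reflectionPerm_apply, wordProd, map_list_prod, List.map_map]
  congr 3
  exact funext (cs.lift_apply_simple cs.isLiftable_reflectionPerm)

theorem reflectionRep_apply_self {t : W} (ht : cs.IsReflection t) (a : ZMod 2) :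
    cs.reflectionRep t (t, a) = (t, a + 1) := by
  obtain ⟨g, i, rfl⟩ := ht
  obtain ⟨ρ, rfl⟩ := cs.wordProd_surjective g
  set e : ZMod 2 := ↑((ris ρ).count (s i))
  have hconj (x : ZMod 2) :
      cs.reflectionRep (π ρ) (s i, x) = (π ρ * s i * (π ρ)⁻¹, x + e) :=
    cs.reflectionRep_wordProd_apply ρ (s i) x
  have hsimple (x : ZMod 2) : cs.reflectionRep (s i) (s i, x) = (s i, x + 1) := by
    simpa [rightInvSeq] using cs.reflectionRep_wordProd_apply [i] (s i) x
  have hconj_inv : (cs.reflectionRep (π ρ))⁻¹ (π ρ * s i * (π ρ)⁻¹, a) = (s i, a - e) := by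
    rw [Equiv.Perm.inv_eq_iff_eq, hconj, sub_add_cancel]
  rw [map_mul, map_mul, map_inv, Equiv.Perm.mul_apply, Equiv.Perm.mul_apply, hconj_inv, hsimple,
    hconj]
  ring_nf

end ReflectionRepresentation

theorem mem_rightInvSeq_of_length_mul_lt {ω : List B} {t : W}
    (ht : cs.IsReflection t) (hlt : ℓ (π ω * t) < ℓ (π ω)) : t ∈ ris ω := by
  classical
  by_contra hmem
  obtain ⟨σ, hσ, hσπ⟩ := cs.exists_isReduced (π ω * t)
  have hodd : ((ris σ).count t : ZMod 2) = 1 := by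
    have h := congrArg Prod.snd (cs.reflectionRep_wordProd_apply σ t 0)
    rwa [← hσπ, map_mul, Equiv.Perm.mul_apply, cs.reflectionRep_apply_self ht,
      reflectionRep_wordProd_apply, count_eq_zero.mpr hmem, Nat.cast_zero, add_zero, zero_add,
      zero_add, eq_comm] at h
  have hσt : t ∈ ris σ := count_pos_iff.mp (Nat.pos_of_ne_zero fun h => by simp [h] at hodd)
  have hσt_inv := (cs.isRightInversion_of_mem_rightInvSeq hσ hσt).2
  rw [← hσπ, mul_assoc, ht.mul_self, mul_one] at hσt_inv
  omega

theorem exists_eraseIdx_of_length_mul_lt {ω : List B} {t : W}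
    (ht : cs.IsReflection t) (hlt : ℓ (π ω * t) < ℓ (π ω)) :
    ∃ k < ω.length, π ω * t = π (ω.eraseIdx k) := by
  obtain ⟨k, hk, rfl⟩ := mem_iff_getElem.mp (cs.mem_rightInvSeq_of_length_mul_lt ht hlt)
  refine ⟨k, by simpa using hk, ?_⟩
  rw [← wordProd_mul_getD_rightInvSeq, getD_eq_getElem]

theorem exists_isReduced_sublist (ω : List B) :
    ∃ l, l <+ ω ∧ cs.IsReduced l ∧ π l = π ω := by
  induction ω using reverseRecOn with
  | nil => exact ⟨[], Sublist.slnil, by simp [IsReduced], rfl⟩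
  | append_singleton ω i ih =>
    obtain ⟨ρ, hρω, hρ, hρπ⟩ := ih
    have hρ_len : ℓ (π ρ) = ρ.length := hρ
    rcases cs.length_mul_simple (π ρ) i with hup | hdown
    · refine ⟨ρ ++ [i], hρω.append (Sublist.refl [i]), ?_, by simp [wordProd_append, hρπ]⟩
      simp only [IsReduced, wordProd_append, wordProd_singleton, hup, hρ_len, length_append,
        length_singleton]
    · obtain ⟨k, hk, heq⟩ :=
        cs.exists_eraseIdx_of_length_mul_lt (ω := ρ) (cs.isReflection_simple i) (by omega)
      refine ⟨ρ.eraseIdx k, ((eraseIdx_sublist ρ k).trans hρω).trans (sublist_append_left ω [i]),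
        ?_, by rw [← heq, hρπ, wordProd_append, wordProd_singleton]⟩
      rw [IsReduced, ← heq, length_eraseIdx_of_lt hk]
      omega

/-- Its reflexive–transitive closure is the Bruhat order in its reflection form. -/
def IsBruhatStep (x y : W) : Prop :=
  ∃ t, cs.IsReflection t ∧ y = x * t ∧ ℓ x < ℓ y

theorem simple_mul_eq_mul_of_length_mul_lt {x t : W} (ht : cs.IsReflection t) (i : B)
    (hxt : ℓ x < ℓ (x * t)) (hsxt : ℓ (s i * x * t) < ℓ (s i * x)) : s i * x = x * t := by
  -- Lengths force `ℓ (x * t) = ℓ (s i * x * t) + 1`, so `x * t` has a reduced word `i :: ν`.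
  -- Exchanging `t` deletes its first letter: deleting a later one would make `s i * x` too short.
  rw [mul_assoc] at hsxt
  have hx_len := cs.length_simple_mul x i
  have hxt_len := cs.length_simple_mul (x * t) i
  obtain ⟨ν, hν, hνπ⟩ := cs.exists_isReduced (s i * (x * t))
  have hν_len : ℓ (s i * (x * t)) = ν.length := by rw [hνπ]; exact hν
  have hiνπ : π (i :: ν) = x * t := by rw [wordProd_cons, ← hνπ, simple_mul_simple_cancel_left]
  obtain ⟨k, hk, hx_eq⟩ := cs.exists_eraseIdx_of_length_mul_lt (ω := i :: ν) ht
    (by rw [hiνπ, mul_assoc, ht.mul_self, mul_one]; exact hxt)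
  rw [hiνπ, mul_assoc, ht.mul_self, mul_one] at hx_eq
  cases k with
  | zero =>
    rw [eraseIdx_cons_zero, ← hνπ] at hx_eq
    conv_lhs => rw [hx_eq, simple_mul_simple_cancel_left]
  | succ k =>
    rw [eraseIdx_cons_succ, wordProd_cons] at hx_eq
    have hsx : ℓ (s i * x) ≤ (ν.eraseIdx k).length := by
      rw [hx_eq, simple_mul_simple_cancel_left]
      exact cs.length_wordProd_le _
    rw [length_eraseIdx_of_lt (by simpa using hk)] at hsx
    omega

theorem reflTransGen_isBruhatStep_simple_mul {x y : W} (h : ReflTransGen cs.IsBruhatStep x y)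
    (i : B) :
    ReflTransGen cs.IsBruhatStep (s i * x) y ∨
      ReflTransGen cs.IsBruhatStep (s i * x) (s i * y) := by
  induction h using ReflTransGen.head_induction_on with
  | refl => exact Or.inr .refl
  | @head x _ hxz hzy ih =>
    obtain ⟨t, ht, rfl, hlt⟩ := hxz
    rcases (ht.length_mul_left_ne (s i * x)).lt_or_gt with hdown | hup
    · rw [cs.simple_mul_eq_mul_of_length_mul_lt ht i hlt hdown]
      exact Or.inl hzy
    · have hstep : cs.IsBruhatStep (s i * x) (s i * (x * t)) :=
        ⟨t, ht, (mul_assoc _ _ _).symm, by rwa [← mul_assoc]⟩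
      exact ih.imp (.head hstep) (.head hstep)

theorem isBruhatStep_wordProd_cons {i : B} {ω : List B} (h : cs.IsReduced (i :: ω)) :
    cs.IsBruhatStep (π ω) (π (i :: ω)) := by
  refine ⟨(π ω)⁻¹ * s i * π ω, ?_, by rw [wordProd_cons]; group, ?_⟩
  · simpa using (cs.isReflection_simple i).conj (π ω)⁻¹
  · have hω : cs.IsReduced ω := h.drop 1
    rw [h.eq, hω.eq, length_cons]
    exact Nat.lt_succ_self _

theorem reflTransGen_isBruhatStep_of_sublist {ω l : List B} (hω : cs.IsReduced ω) (hl : l <+ ω) :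
    ReflTransGen cs.IsBruhatStep (π l) (π ω) := by
  induction hl with
  | slnil => exact .refl
  | cons i _ ih => exact .tail (ih (hω.drop 1)) (cs.isBruhatStep_wordProd_cons hω)
  | cons_cons i _ ih =>
    rcases cs.reflTransGen_isBruhatStep_simple_mul (ih (hω.drop 1)) i with h | h
    · exact .tail (by rwa [wordProd_cons]) (cs.isBruhatStep_wordProd_cons hω)
    · simpa only [wordProd_cons] using h

theorem exists_sublist_of_reflTransGen_isBruhatStep {z w : W} (h : ReflTransGen cs.IsBruhatStep z w)
    {ω : List B} (hω : π ω = w) : ∃ l, l <+ ω ∧ π l = z := by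
  induction h using ReflTransGen.head_induction_on with
  | refl => exact ⟨ω, .refl ω, hω⟩
  | head hxy _ ih =>
    obtain ⟨m, hmω, hmπ⟩ := ih
    obtain ⟨t, ht, rfl, hlt⟩ := hxy
    obtain ⟨k, -, heq⟩ := cs.exists_eraseIdx_of_length_mul_lt (ω := m) ht
      (by rwa [hmπ, mul_assoc, ht.mul_self, mul_one])
    exact ⟨m.eraseIdx k, (eraseIdx_sublist m k).trans hmω,
      by rw [← heq, hmπ, mul_assoc, ht.mul_self, mul_one]⟩

variable {cs} in
theorem bruhatLE.exists_isReduced_sublist {z w : W} (h : cs.bruhatLE z w) {ω : List B}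
    (hω : π ω = w) : ∃ l, l <+ ω ∧ cs.IsReduced l ∧ π l = z := by
  obtain ⟨ω', hω', rfl, l', hl'ω', rfl⟩ := h
  obtain ⟨m, hmω, hmπ⟩ := cs.exists_sublist_of_reflTransGen_isBruhatStep
    (cs.reflTransGen_isBruhatStep_of_sublist hω' hl'ω') hω
  obtain ⟨l, hlm, hl, hlπ⟩ := cs.exists_isReduced_sublist m
  exact ⟨l, hlm.trans hmω, hl, hlπ.trans hmπ⟩

theorem exists_mul_of_bruhatLE_mul {z x y : W} (h : cs.bruhatLE z (x * y)) :
    ∃ u v, cs.bruhatLE u x ∧ cs.bruhatLE v y ∧ z = u * v ∧ ℓ z = ℓ u + ℓ v := by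
  obtain ⟨ωx, hωx, rfl⟩ := cs.exists_isReduced x
  obtain ⟨ωy, hωy, rfl⟩ := cs.exists_isReduced y
  obtain ⟨l, hl, hl_red, rfl⟩ := h.exists_isReduced_sublist (cs.wordProd_append ωx ωy)
  obtain ⟨lx, ly, rfl, hlx, hly⟩ := sublist_append_iff.mp hl
  refine ⟨π lx, π ly, ⟨ωx, hωx, rfl, lx, hlx, rfl⟩, ⟨ωy, hωy, rfl, ly, hly, rfl⟩,
    cs.wordProd_append lx ly, ?_⟩
  have hlen := hl_red.eq
  have := cs.length_wordProd_le lx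
  have := cs.length_wordProd_le ly
  have := cs.length_mul_le (π lx) (π ly)
  rw [wordProd_append, length_append] at hlen
  rw [wordProd_append]
  omega

theorem wordProd_mem_parabolic {J : Set B} {ω : List B} (hω : ∀ i ∈ ω, i ∈ J) :
    π ω ∈ cs.parabolic J := by
  refine list_prod_mem fun _ hg => ?_
  obtain ⟨i, hi, rfl⟩ := mem_map.mp hg
  exact Subgroup.subset_closure ⟨i, hω i hi, rfl⟩

theorem exists_word_of_mem_parabolic {J : Set B} {g : W} (hg : g ∈ cs.parabolic J) :
    ∃ ω : List B, (∀ i ∈ ω, i ∈ J) ∧ π ω = g := by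
  induction hg using Subgroup.closure_induction with
  | mem _ hx =>
    obtain ⟨i, hi, rfl⟩ := hx
    exact ⟨[i], by simpa using hi, cs.wordProd_singleton i⟩
  | one => exact ⟨[], by simp, cs.wordProd_nil⟩
  | mul _ _ _ _ hx hy =>
    obtain ⟨ωx, hωx, rfl⟩ := hx
    obtain ⟨ωy, hωy, rfl⟩ := hy
    exact ⟨ωx ++ ωy, fun i hi => (mem_append.mp hi).elim (hωx i) (hωy i), cs.wordProd_append ωx ωy⟩
  | inv _ _ hx =>
    obtain ⟨ω, hω, rfl⟩ := hx
    exact ⟨ω.reverse, by simpa using hω, cs.wordProd_reverse ω⟩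

variable {cs} in
theorem bruhatLE.mem_parabolic {J : Set B} {u w : W} (h : cs.bruhatLE u w)
    (hw : w ∈ cs.parabolic J) : u ∈ cs.parabolic J := by
  obtain ⟨ω, hωJ, hω⟩ := cs.exists_word_of_mem_parabolic hw
  obtain ⟨l, hl, -, rfl⟩ := h.exists_isReduced_sublist hω
  exact cs.wordProd_mem_parabolic fun i hi => hωJ i (hl.subset hi)

variable {cs} in
theorem bruhatLE.mem_parabolic_support {v w : W} (h : cs.bruhatLE v w) :
    v ∈ cs.parabolic (cs.support w) := by
  obtain ⟨ω, hω, rfl, l, hl, rfl⟩ := h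
  exact cs.wordProd_mem_parabolic fun i hi => ⟨ω, hω, rfl, hl.subset hi⟩

theorem mem_support_of_simple_eq {w : W} {i j : B} (hij : s i = s j) (hj : j ∈ cs.support w) :
    i ∈ cs.support w := by
  classical
  obtain ⟨ω, hω, rfl, hjω⟩ := hj
  have hπ : π (ω.map fun k => if k = j then i else k) = π ω := by
    simp only [wordProd, List.map_map]
    congr 1
    exact map_congr_left fun k _ => by by_cases hk : k = j <;> simp [hk, hij]
  refine ⟨_, ?_, hπ, mem_map.mpr ⟨j, hjω, if_pos rfl⟩⟩
  rw [IsReduced, hπ, hω.eq, length_map]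

theorem parabolic_inf_parabolic_support_eq_bot {J : Set B} {w : W}
    (hdisj : cs.support w ∩ J = ∅) : cs.parabolic J ⊓ cs.parabolic (cs.support w) = ⊥ := by
  refine (Subgroup.eq_bot_iff_forall _).mpr fun g ⟨hgJ, hgw⟩ => ?_
  obtain ⟨α, hαJ, hα⟩ := cs.exists_word_of_mem_parabolic hgJ
  obtain ⟨β, hβw, hβ⟩ := cs.exists_word_of_mem_parabolic hgw
  obtain ⟨_ | ⟨i, α'⟩, hα'α, hα', hα'π⟩ := cs.exists_isReduced_sublist α
  · rw [← hα, ← hα'π, wordProd_nil]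
  have hi : cs.bruhatLE (s i) g :=
    ⟨i :: α', hα', hα'π.trans hα, [i], by simp, cs.wordProd_singleton i⟩
  obtain ⟨l, hlβ, hl, hlπ⟩ := hi.exists_isReduced_sublist hβ
  obtain ⟨j, rfl⟩ := List.length_eq_one_iff.mp (by rw [← hl.eq, hlπ, length_simple])
  have hiw : i ∈ cs.support w :=
    cs.mem_support_of_simple_eq (by rw [← hlπ, wordProd_singleton])
      (hβw j (hlβ.subset (mem_singleton_self j)))
  exact (Set.eq_empty_iff_forall_notMem.mp hdisj i ⟨hiw, hαJ i (hα'α.subset mem_cons_self)⟩).elim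

theorem eq_and_eq_of_mul_eq_mul {J : Set B} {x y u v u' v' : W} (hx : x ∈ cs.parabolic J)
    (hdisj : cs.support y ∩ J = ∅) (hu : cs.bruhatLE u x) (hu' : cs.bruhatLE u' x)
    (hv : cs.bruhatLE v y) (hv' : cs.bruhatLE v' y) (h : u * v = u' * v') :
    u = u' ∧ v = v' := by
  have hg : u'⁻¹ * u ∈ cs.parabolic J ⊓ cs.parabolic (cs.support y) := by
    refine Subgroup.mem_inf.mpr
      ⟨mul_mem (inv_mem (hu'.mem_parabolic hx)) (hu.mem_parabolic hx), ?_⟩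
    have hvv : u'⁻¹ * u = v' * v⁻¹ := by
      rw [inv_mul_eq_iff_eq_mul, ← mul_assoc, eq_mul_inv_iff_mul_eq, h]
    rw [hvv]
    exact mul_mem hv'.mem_parabolic_support (inv_mem hv.mem_parabolic_support)
  rw [cs.parabolic_inf_parabolic_support_eq_bot hdisj, Subgroup.mem_bot, inv_mul_eq_one] at hg
  subst hg
  exact ⟨rfl, mul_left_cancel h⟩

end CoxeterSystem

theorem unique_factorization_below_horospherical_element_general
    (cs : CoxeterSystem M W) (J : Set B)
    (w0J : W) (hw0J : w0J ∈ cs.parabolic J)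
    (c : W)
    (hdisj : cs.support c ∩ J = ∅)
    (w : W) (hw : w = w0J * c) :
    ∀ z : W, cs.bruhatLE z w →
      ∃! p : W × W, cs.bruhatLE p.1 w0J ∧ cs.bruhatLE p.2 c ∧ z = p.1 * p.2 ∧
        cs.length z = cs.length p.1 + cs.length p.2 := by
  intro z hz
  subst hw
  obtain ⟨u, v, hu, hv, rfl, hlen⟩ := cs.exists_mul_of_bruhatLE_mul hz
  refine ⟨(u, v), ⟨hu, hv, rfl, hlen⟩, ?_⟩
  rintro ⟨u', v'⟩ ⟨hu', hv', huv, -⟩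
  obtain ⟨rfl, rfl⟩ := cs.eq_and_eq_of_mul_eq_mul hw0J hdisj hu' hu hv' hv huv.symm
  rfl

theorem unique_factorization_below_horospherical_element
    (cs : CoxeterSystem M W) (J : Set B)
    (hfin : Finite (cs.parabolic J))
    (w0J : W) (hw0J : w0J ∈ cs.parabolic J)
    (hw0Jmax : ∀ u ∈ cs.parabolic J, cs.length u ≤ cs.length w0J)
    (c : W) (hc : ∃ l : List B, l.Nodup ∧ cs.wordProd l = c)
    (hdisj : cs.support c ∩ J = ∅)
    (w : W) (hw : w = w0J * c)
    (hlen : cs.length w = cs.length w0J + cs.length c) :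
    ∀ z : W, cs.bruhatLE z w →
      ∃! p : W × W, cs.bruhatLE p.1 w0J ∧ cs.bruhatLE p.2 c ∧ z = p.1 * p.2 ∧
        cs.length z = cs.length p.1 + cs.length p.2 :=
  unique_factorization_below_horospherical_element_general cs J w0J hw0J c hdisj w hw
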